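/- arXiv:1503.01488 — 4 statements merged into one kernel-verified Lean document; each statement's English description precedes it below -/
import Mathlib

section
/- Every ld-envyfree random assignment is weakly sd-envyfree, and the inclusion is strict: there exists a weakly sd-envyfree assignment that is not ld-envyfree. -/
open Finset

/-- Upper cumulative probability `w(≻, ℓ, A)`. -/
noncomputable def wCum {M : Type*} [Fintype M] (pref : M → M → Prop) (A : M → ℝ) (ℓ : M) : ℝ :=
  open scoped Classical in
  ∑ j ∈ Finset.univ.filter (fun j => pref j ℓ ∨ j = ℓ), A j

/-- An assignment is ld-envyfree if no agent ld-prefers another agent's allocation. -/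
def LdEnvyFree {N M : Type*} (pref : N → M → M → Prop) (A : N → M → ℝ) : Prop :=
  ¬ ∃ (i k : N) (ℓ : M), A k ℓ > A i ℓ ∧ ∀ j, pref i j ℓ → A i j = A k j

/-- An assignment is weakly sd-envyfree if no agent's allocation is weakly sd-dominated by
another agent's allocation (whenever they differ, the owner strictly prefers hers somewhere). -/
def WeakSdEnvyFree {N M : Type*} [Fintype M] (pref : N → M → M → Prop) (A : N → M → ℝ) : Prop :=
  ∀ i k : N, A i ≠ A k → ∃ ℓ : M, wCum (pref i) (A i) ℓ > wCum (pref i) (A k) ℓ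

/-! Every ld-envyfree assignment is weakly sd-envyfree: if `A i ≠ A k`, let `ℓ` be the
`≻_i`-best object on which they differ. Ld-envyfreeness forces `A i ℓ > A k ℓ`, and since the
two allocations agree above `ℓ`, agent `i`'s cumulative share up to `ℓ` is strictly larger.
The assignment of the paper's example is weakly sd-envyfree but the first agent ld-envies the
second at the common top object `a`. -/

theorem exists_ne_forall_eq_of_wellFounded {M β : Type*} {r : M → M → Prop}
    (hwf : WellFounded r) {f g : M → β} (hfg : f ≠ g) :
    ∃ ℓ, f ℓ ≠ g ℓ ∧ ∀ j, r j ℓ → f j = g j := by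
  obtain ⟨ℓ, hℓ, hmin⟩ := hwf.has_min {j | f j ≠ g j} (Function.ne_iff.mp hfg)
  exact ⟨ℓ, hℓ, fun j hj => not_not.mp fun hne => hmin j hne hj⟩

theorem wCum_lt_wCum_of_eq_above {M : Type*} [Fintype M] {r : M → M → Prop} {A B : M → ℝ}
    {ℓ : M} (habove : ∀ j, r j ℓ → B j = A j) (hℓ : B ℓ < A ℓ) :
    wCum r B ℓ < wCum r A ℓ := by
  classical
  refine Finset.sum_lt_sum (fun j hj => ?_) ⟨ℓ, by simp, hℓ⟩
  rcases (Finset.mem_filter.mp hj).2 with hj | rfl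
  · exact (habove j hj).le
  · exact hℓ.le

theorem LdEnvyFree.weakSdEnvyFree {N M : Type*} [Fintype M] {pref : N → M → M → Prop}
    (hpref : ∀ i, IsStrictOrder M (pref i)) {A : N → M → ℝ} (hA : LdEnvyFree pref A) :
    WeakSdEnvyFree pref A := by
  intro i k hik
  have hwf : WellFounded (pref i) := by
    have := hpref i
    exact Finite.wellFounded_of_trans_of_irrefl _
  obtain ⟨ℓ, hne, habove⟩ := exists_ne_forall_eq_of_wellFounded hwf hik
  have hgt : A k ℓ < A i ℓ :=
    (hne.symm.lt_or_gt).resolve_right fun hlt => hA ⟨i, k, ℓ, hlt, habove⟩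
  exact ⟨ℓ, wCum_lt_wCum_of_eq_above (fun j hj => (habove j hj).symm) hgt⟩

/-- Both agents rank `a ≻ b ≻ c`, encoded as `0 < 1 < 2`. -/
def examplePref : Fin 2 → Fin 3 → Fin 3 → Prop := fun _ j ℓ => j < ℓ

noncomputable def exampleAssignment : Fin 2 → Fin 3 → ℝ :=
  ![![1/6, 5/6, 0], ![4/6, 1/6, 1/6]]

theorem weakSdEnvyFree_exampleAssignment : WeakSdEnvyFree examplePref exampleAssignment := by
  intro i k hik
  fin_cases i <;> fin_cases k
  · exact absurd rfl hik
  · refine ⟨1, ?_⟩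
    simp [wCum, examplePref, exampleAssignment, Finset.sum_filter, Fin.sum_univ_three, Fin.lt_def]
    norm_num
  · exact ⟨0, wCum_lt_wCum_of_eq_above (fun j hj => absurd hj (Fin.not_lt_zero j))
      (by norm_num [exampleAssignment])⟩
  · exact absurd rfl hik

theorem not_ldEnvyFree_exampleAssignment : ¬ LdEnvyFree examplePref exampleAssignment :=
  fun h => h ⟨0, 1, 0, by norm_num [exampleAssignment],
    fun j hj => absurd hj (Fin.not_lt_zero j)⟩

/-- every ld-envyfree assignment is weakly sd-envyfree, and the inclusion is
strict: some weakly sd-envyfree assignment is not ld-envyfree. -/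
theorem ldEnvyfree_subset_weakSdEnvyfree_strict :
    (∀ (N M : Type) [Fintype N] [Fintype M] (pref : N → M → M → Prop)
      (_ : ∀ i, IsStrictTotalOrder M (pref i)) (A : N → M → ℝ)
      (_ : ∀ i j, 0 ≤ A i j) (_ : ∀ i, ∑ j, A i j = 1),
      LdEnvyFree pref A → WeakSdEnvyFree pref A)
    ∧ (∃ (pref : Fin 2 → Fin 3 → Fin 3 → Prop) (A : Fin 2 → Fin 3 → ℝ),
        (∀ i, IsStrictTotalOrder (Fin 3) (pref i)) ∧ (∀ i j, 0 ≤ A i j) ∧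
        (∀ i, ∑ j, A i j = 1) ∧
        WeakSdEnvyFree pref A ∧ ¬ LdEnvyFree pref A) := by
  refine ⟨fun N M _ _ pref hpref A _ _ hA =>
    hA.weakSdEnvyFree fun i => (hpref i).toIsStrictOrder, ?_⟩
  refine ⟨examplePref, exampleAssignment,
    fun _ => inferInstanceAs (IsStrictTotalOrder (Fin 3) (· < ·)), ?_, ?_,
    weakSdEnvyFree_exampleAssignment, not_ldEnvyFree_exampleAssignment⟩
  · intro i j
    fin_cases i <;> fin_cases j <;> simp [exampleAssignment] <;> norm_num
  · intro i
    fin_cases i <;> simp [exampleAssignment, Fin.sum_univ_three] <;> norm_num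
end

section
/- The random serial dictatorship mechanism with n = m agents and objects is ld-envyfree: no agent's RSD allocation is lexicographically dominated (from her own preference perspective) by another agent's allocation. -/
/-
Pair each priority ordering `σ` with `(i k) * σ`, which exchanges the turns of agents `i` and `k`;
say `i` moves first in `σ` and picks `f`, while `k` picks `v` at that same turn in `(i k) * σ`.
If `v = f`, both orderings leave the same objects for `k`'s turn in `σ` and for `i`'s turn in
`(i k) * σ`, so `i`'s second pick is at least as good for `i` as `k`'s. If `v ≠ f`, both of `k`'s
picks are strictly worse than `f` for `i`. Either way `i`'s two picks lexicographically dominate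
`k`'s from `i`'s viewpoint, and since the lexicographic order on count vectors is compatible with
addition, summing over the pairs shows that `i`'s RSD allocation lexicographically dominates `k`'s.
-/

open Finset

/-- The set of objects still available after the first `k` agents in the priority ordering
`σ` have picked. Preferences are rank permutations: `p i j` is the rank agent `i`
assigns to object `j` (lower rank = more preferred). -/
def availAux (n : ℕ) (p : Fin n → Equiv.Perm (Fin n)) (σ : Equiv.Perm (Fin n)) :
    ℕ → Finset (Fin n)
  | 0 => Finset.univ
  | k + 1 =>
    if h : k < n then
      let S := availAux n p σ k
      let a := σ ⟨k, h⟩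
      if hS : S.Nonempty then
        S.erase ((p a).symm ((S.image (p a)).min' (hS.image _)))
      else S
    else availAux n p σ k

/-- The object agent `i` picks under serial dictatorship with priority ordering `σ`:
her most preferred object among those still available when her turn (position `σ⁻¹ i`)
comes. -/
def sdPick (n : ℕ) (p : Fin n → Equiv.Perm (Fin n)) (σ : Equiv.Perm (Fin n)) (i : Fin n) :
    Fin n :=
  let S := availAux n p σ (σ.symm i).val
  if hS : S.Nonempty then (p i).symm ((S.image (p i)).min' (hS.image _)) else i

/-- The random serial dictatorship assignment: the probability that agent `i` receives
object `j`, averaging serial dictatorship over all `n!` priority orderings uniformly. -/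
def rsd (n : ℕ) (p : Fin n → Equiv.Perm (Fin n)) (i j : Fin n) : ℚ :=
  (∑ σ : Equiv.Perm (Fin n), if sdPick n p σ i = j then 1 else 0) / (Nat.factorial n)

def favorite {α β : Type*} [LinearOrder β] (e : α ≃ β) {S : Finset α} (hS : S.Nonempty) : α :=
  e.symm ((S.image e).min' (hS.image e))

section Favorite

variable {α β : Type*} [LinearOrder β] (e : α ≃ β) {S : Finset α} (hS : S.Nonempty)

lemma favorite_mem : favorite e hS ∈ S := by
  obtain ⟨x, hx, hex⟩ := mem_image.mp ((S.image e).min'_mem (hS.image e))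
  rwa [favorite, ← hex, Equiv.symm_apply_apply]

lemma favorite_le {x : α} (hx : x ∈ S) : e (favorite e hS) ≤ e x := by
  rw [favorite, Equiv.apply_symm_apply]
  exact min'_le _ _ (mem_image_of_mem e hx)

lemma favorite_lt {x : α} (hx : x ∈ S) (hne : x ≠ favorite e hS) : e (favorite e hS) < e x :=
  (favorite_le e hS hx).lt_of_ne fun h => hne (e.injective h).symm

end Favorite

section SerialDictatorship

variable {n : ℕ} {p : Fin n → Equiv.Perm (Fin n)} {σ : Equiv.Perm (Fin n)}

lemma availAux_succ_of_lt {t : ℕ} (ht : t < n) (hS : (availAux n p σ t).Nonempty) :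
    availAux n p σ (t + 1) = (availAux n p σ t).erase (favorite (p (σ ⟨t, ht⟩)) hS) := by
  rw [availAux, dif_pos ht, dif_pos hS]; rfl

lemma availAux_succ_subset (t : ℕ) : availAux n p σ (t + 1) ⊆ availAux n p σ t := by
  simp only [availAux]
  split_ifs
  exacts [erase_subset _ _, subset_rfl, subset_rfl]

lemma availAux_antitone : Antitone (availAux n p σ) :=
  antitone_nat_of_succ_le availAux_succ_subset

lemma card_availAux {t : ℕ} (ht : t ≤ n) : #(availAux n p σ t) = n - t := by
  induction t with
  | zero => simp [availAux]
  | succ t ih =>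
    have hS : (availAux n p σ t).Nonempty := card_pos.mp (by omega)
    rw [availAux_succ_of_lt ht hS, card_erase_of_mem (favorite_mem _ hS), ih (by omega)]
    omega

lemma availAux_nonempty {t : ℕ} (ht : t < n) : (availAux n p σ t).Nonempty :=
  card_pos.mp (by rw [card_availAux ht.le]; omega)

lemma availAux_eq_of_agree {σ' : Equiv.Perm (Fin n)} {t₀ t : ℕ} (ht : t₀ ≤ t)
    (h₀ : availAux n p σ t₀ = availAux n p σ' t₀)
    (hagree : ∀ s (hs : s < n), t₀ ≤ s → s < t → σ ⟨s, hs⟩ = σ' ⟨s, hs⟩) :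
    availAux n p σ t = availAux n p σ' t := by
  induction t, ht using Nat.le_induction with
  | base => exact h₀
  | succ t ht ih =>
    have ih := ih fun s hs h₁ h₂ => hagree s hs h₁ (by omega)
    by_cases h : t < n
    · simp only [availAux, dif_pos h, ih, hagree t h ht (by omega)]
    · simp only [availAux, dif_neg h, ih]

lemma sdPick_eq_favorite (a : Fin n) :
    sdPick n p σ a = favorite (p a) (availAux_nonempty (p := p) (σ := σ) (σ.symm a).isLt) := by
  rw [sdPick, dif_pos (availAux_nonempty (σ.symm a).isLt)]; rfl

lemma sdPick_mem (a : Fin n) : sdPick n p σ a ∈ availAux n p σ (σ.symm a) := by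
  rw [sdPick_eq_favorite]; exact favorite_mem _ _

lemma sdPick_le {a x : Fin n} (hx : x ∈ availAux n p σ (σ.symm a)) :
    p a (sdPick n p σ a) ≤ p a x := by
  rw [sdPick_eq_favorite]; exact favorite_le _ _ hx

lemma sdPick_lt {a x : Fin n} (hx : x ∈ availAux n p σ (σ.symm a)) (hne : x ≠ sdPick n p σ a) :
    p a (sdPick n p σ a) < p a x := by
  rw [sdPick_eq_favorite] at hne ⊢; exact favorite_lt _ _ hx hne

lemma availAux_succ_symm (a : Fin n) :
    availAux n p σ (σ.symm a + 1) = (availAux n p σ (σ.symm a)).erase (sdPick n p σ a) := by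
  rw [availAux_succ_of_lt (σ.symm a).isLt (availAux_nonempty (σ.symm a).isLt),
    sdPick_eq_favorite]
  simp

lemma sdPick_swap_mul_cases {i k : Fin n} (hik : σ.symm i < σ.symm k) :
    (sdPick n p (Equiv.swap i k * σ) k = sdPick n p σ i ∧
        p i (sdPick n p (Equiv.swap i k * σ) i) ≤ p i (sdPick n p σ k)) ∨
      (p i (sdPick n p σ i) < p i (sdPick n p σ k) ∧
        p i (sdPick n p σ i) < p i (sdPick n p (Equiv.swap i k * σ) k)) := by
  set τ := Equiv.swap i k * σ
  have hτk : τ.symm k = σ.symm i := by simp [τ, Equiv.Perm.mul_def]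
  have hτi : τ.symm i = σ.symm k := by simp [τ, Equiv.Perm.mul_def]
  have hagree : ∀ s (hs : s < n), s ≠ σ.symm i → s ≠ σ.symm k → σ ⟨s, hs⟩ = τ ⟨s, hs⟩ := by
    intro s hs hi hk
    refine (Equiv.swap_apply_of_ne_of_ne ?_ ?_).symm <;> rintro h
    · exact hi (by rw [← h, Equiv.symm_apply_apply])
    · exact hk (by rw [← h, Equiv.symm_apply_apply])
  have hbefore : availAux n p σ (σ.symm i) = availAux n p τ (σ.symm i) :=
    availAux_eq_of_agree (Nat.zero_le _) rfl fun s hs _ hs' =>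
      hagree s hs hs'.ne (by omega)
  have hv : sdPick n p τ k ∈ availAux n p σ (σ.symm i) := hbefore ▸ hτk ▸ sdPick_mem k
  by_cases hvf : sdPick n p τ k = sdPick n p σ i
  · have hnext : availAux n p σ (σ.symm i + 1) = availAux n p τ (σ.symm i + 1) := by
      rw [availAux_succ_symm, ← hτk, availAux_succ_symm, hvf, hτk, hbefore]
    have hatk : availAux n p σ (σ.symm k) = availAux n p τ (σ.symm k) :=
      availAux_eq_of_agree hik hnext fun s hs h₁ h₂ => hagree s hs (by omega) h₂.ne
    refine .inl ⟨hvf, sdPick_le ?_⟩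
    rw [hτi, ← hatk]
    exact sdPick_mem k
  · have hu : sdPick n p σ k ∈ (availAux n p σ (σ.symm i)).erase (sdPick n p σ i) := by
      rw [← availAux_succ_symm]
      exact availAux_antitone hik (sdPick_mem k)
    exact .inr ⟨sdPick_lt (mem_of_mem_erase hu) (ne_of_mem_erase hu), sdPick_lt hv hvf⟩

end SerialDictatorship

lemma Finsupp.Lex.single_add_single_le {α : Type*} [LinearOrder α] {a b c d : α}
    (h : (d = a ∧ b ≤ c) ∨ (a < c ∧ a < d)) :
    toLex (single c 1 + single d 1 : α →₀ ℕ) ≤ toLex (single a 1 + single b 1) := by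
  rcases h with ⟨rfl, hbc⟩ | ⟨hac, had⟩
  · rw [add_comm, toLex_add, toLex_add]
    exact add_le_add le_rfl (Lex.single_le_iff.2 hbc)
  · refine le_of_lt ?_
    calc toLex (single c 1 + single d 1) < toLex (single a 1) :=
          Lex.lt_iff.2 ⟨a, fun j hj => by simp [hj.ne', (hj.trans hac).ne',
            (hj.trans had).ne'], by simp [hac.ne, had.ne]⟩
      _ ≤ toLex (single a 1 + single b 1) := by
          rw [toLex_add]; exact le_add_of_nonneg_right zero_le

/-- Coordinate `r` counts the orderings in which `a` receives `i`'s `r`-th favourite object, so the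
lexicographic order on these vectors is lexicographic dominance from `i`'s viewpoint. -/
noncomputable def rankProfile (n : ℕ) (p : Fin n → Equiv.Perm (Fin n)) (i a : Fin n) :
    Lex (Fin n →₀ ℕ) :=
  toLex (∑ σ : Equiv.Perm (Fin n), Finsupp.single (p i (sdPick n p σ a)) 1)

section RankProfile

variable {n : ℕ} {p : Fin n → Equiv.Perm (Fin n)}

lemma rankProfile_apply (i a r : Fin n) :
    (ofLex (rankProfile n p i a) r : ℚ) = n.factorial * rsd n p a ((p i).symm r) := by
  rw [rsd, mul_div_cancel₀ _ (by positivity)]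
  simp [rankProfile, Finsupp.finsetSum_apply, Finsupp.single_apply, Equiv.eq_symm_apply]

lemma rankProfile_le_self (i k : Fin n) : rankProfile n p i k ≤ rankProfile n p i i := by
  set g : Fin n → Equiv.Perm (Fin n) → Lex (Fin n →₀ ℕ) :=
    fun a σ => toLex (Finsupp.single (p i (sdPick n p σ a)) 1)
  have hpair : ∀ σ, g k σ + g k (Equiv.swap i k * σ) ≤ g i σ + g i (Equiv.swap i k * σ) := by
    intro σ
    rcases lt_trichotomy (σ.symm i) (σ.symm k) with h | h | h
    · exact Finsupp.Lex.single_add_single_le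
        ((sdPick_swap_mul_cases h).imp (And.imp_left (congrArg _)) id)
    · rw [σ.symm.injective h]
    · have h' : (Equiv.swap i k * σ).symm i < (Equiv.swap i k * σ).symm k := by
        simpa [Equiv.Perm.mul_def] using h
      have := Finsupp.Lex.single_add_single_le
        ((sdPick_swap_mul_cases (p := p) h').imp (And.imp_left (congrArg _)) id)
      rw [← mul_assoc, Equiv.swap_mul_self, one_mul] at this
      rw [add_comm (g k σ), add_comm (g i σ)]
      exact this
  have hsum : ∀ a, ∑ σ, (g a σ + g a (Equiv.swap i k * σ)) =
      rankProfile n p i a + rankProfile n p i a := fun a => by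
    rw [sum_add_distrib, show ∑ σ, g a (Equiv.swap i k * σ) = ∑ σ, g a σ from
      Equiv.sum_comp (Equiv.mulLeft _) (g a)]
    rfl
  have htwice := sum_le_sum (s := univ) fun σ _ => hpair σ
  rw [hsum, hsum] at htwice
  exact le_of_not_gt fun h => htwice.not_gt (add_lt_add h h)

end RankProfile

/-- with `n = m`, RSD is ld-envyfree: no agent `i` ld-envies another agent
`k`, i.e. there is no object `ℓ` with `RSD_{k,ℓ} > RSD_{i,ℓ}` while the allocations agree
on every object `i` strictly prefers to `ℓ`. -/
theorem rsd_ldEnvyfree (n : ℕ) (p : Fin n → Equiv.Perm (Fin n)) :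
    ¬ ∃ (i k ℓ : Fin n), rsd n p k ℓ > rsd n p i ℓ ∧
      ∀ j, p i j < p i ℓ → rsd n p i j = rsd n p k j := by
  rintro ⟨i, k, ℓ, hgt, hagree⟩
  refine (rankProfile_le_self (p := p) i k).not_gt
    (Finsupp.Lex.lt_iff.2 ⟨p i ℓ, fun r hr => ?_, ?_⟩)
  · refine Nat.cast_injective (R := ℚ) ?_
    simp only [rankProfile_apply]
    rw [hagree _ (by simpa using hr)]
  · refine Nat.cast_lt (α := ℚ) |>.mp ?_
    simp only [rankProfile_apply, Equiv.symm_apply_apply]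
    exact mul_lt_mul_of_pos_left hgt (by positivity)
end

section
/- For the preference profile ((abcd),(abcd),(badc),(badc)), the assignment A where agents 1,2 each receive (1/2, 0, 1/2, 0) over (a,b,c,d) and agents 3,4 each receive (0, 1/2, 0, 1/2) stochastically dominates the RSD assignment for every agent; hence RSD is not sd-efficient at this profile. -/
open Finset

/-- The preference profile `((abcd),(abcd),(badc),(badc))` as rank permutations. -/
def p9 : Fin 4 → Equiv.Perm (Fin 4) :=
  ![1, 1, (Equiv.swap 0 1).trans (Equiv.swap 2 3), (Equiv.swap 0 1).trans (Equiv.swap 2 3)]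

/-- The PS assignment: agents 1,2 get `(1/2,0,1/2,0)`, agents 3,4 get `(0,1/2,0,1/2)`. -/
def A9 : Fin 4 → Fin 4 → ℚ :=
  ![![1/2, 0, 1/2, 0], ![1/2, 0, 1/2, 0], ![0, 1/2, 0, 1/2], ![0, 1/2, 0, 1/2]]

/-- Upper cumulative sum `w(≻_i, ℓ, X)` of allocation `X` w.r.t. agent `i`'s ranking. -/
def w9 (i : Fin 4) (X : Fin 4 → ℚ) (ℓ : Fin 4) : ℚ :=
  ∑ j ∈ Finset.univ.filter (fun j => p9 i j ≤ p9 i ℓ), X j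

/-! Enumerating the 24 priority orderings gives the RSD assignment: each agent gets her first
and third choices with probability 5/12 and her second and fourth with probability 1/12.
The assignment `A9` moves the 1/12 on the second and fourth choices to the first and third:
agents 1, 2 hand their shares of `b`, `d` to agents 3, 4 in exchange for their shares of `a`, `c`,
so every agent's upper cumulative sums weakly increase. -/

theorem rsd_eq_card_div (n : ℕ) (p : Fin n → Equiv.Perm (Fin n)) (i j : Fin n) :
    rsd n p i j = #{σ | sdPick n p σ i = j} / n.factorial := by
  rw [rsd, sum_boole]

theorem card_sdPick_p9 (i j : Fin 4) : #{σ | sdPick 4 p9 σ i = j} =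
    ![![10, 2, 10, 2], ![10, 2, 10, 2], ![2, 10, 2, 10], ![2, 10, 2, 10]] i j := by
  revert i j; decide

def rsd9 : Fin 4 → Fin 4 → ℚ :=
  ![![5/12, 1/12, 5/12, 1/12], ![5/12, 1/12, 5/12, 1/12],
    ![1/12, 5/12, 1/12, 5/12], ![1/12, 5/12, 1/12, 5/12]]

theorem rsd_p9 : rsd 4 p9 = rsd9 := by
  ext i j
  rw [rsd_eq_card_div, card_sdPick_p9]
  fin_cases i <;> fin_cases j <;> norm_num [rsd9, Nat.factorial]

theorem p9_apply (i j : Fin 4) :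
    p9 i j = ![![0, 1, 2, 3], ![0, 1, 2, 3], ![1, 0, 3, 2], ![1, 0, 3, 2]] i j := by
  revert i j; decide

def SDDominates9 (i : Fin 4) (X Y : Fin 4 → ℚ) : Prop :=
  X ≠ Y ∧ ∀ ℓ, w9 i Y ℓ ≤ w9 i X ℓ

theorem sdDominates9_A9_rsd9 (i : Fin 4) : SDDominates9 i (A9 i) (rsd9 i) := by
  refine ⟨fun h => ?_, fun ℓ => ?_⟩
  · have h0 := congrFun h 0
    fin_cases i <;> norm_num [A9, rsd9] at h0
  · fin_cases i <;> fin_cases ℓ <;>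
      norm_num +decide [w9, p9_apply, sum_filter, Fin.sum_univ_succ, A9, rsd9]

theorem A9_row_stochastic (i : Fin 4) : (∀ j, 0 ≤ A9 i j) ∧ ∑ j, A9 i j = 1 := by
  fin_cases i <;> norm_num [A9, Fin.forall_fin_succ, Fin.sum_univ_succ]

/-- the assignment `A9` stochastically dominates the RSD assignment for every
agent; hence RSD is not sd-efficient at this profile (some feasible assignment
sd-dominates it for all agents). -/
theorem rsd_not_sd_efficient :
    (∀ i : Fin 4, A9 i ≠ (fun j => rsd 4 p9 i j) ∧
      ∀ ℓ, w9 i (A9 i) ℓ ≥ w9 i (fun j => rsd 4 p9 i j) ℓ) ∧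
    ∃ B : Fin 4 → Fin 4 → ℚ,
      (∀ i, (∀ j, 0 ≤ B i j) ∧ ∑ j, B i j = 1) ∧
      ∀ i, B i ≠ (fun j => rsd 4 p9 i j) ∧
        ∀ ℓ, w9 i (B i) ℓ ≥ w9 i (fun j => rsd 4 p9 i j) ℓ := by
  have hdom : ∀ i, SDDominates9 i (A9 i) (rsd 4 p9 i) := by
    rw [rsd_p9]
    exact sdDominates9_A9_rsd9
  exact ⟨hdom, A9, A9_row_stochastic, hdom⟩
end

section
/- For two agents and four objects with true preferences agent 1: a≻b≻c≻d and agent 2: b≻c≻a≻d, agent 1's PS allocation under the misreport b≻a≻c≻d, namely (1, 1/2, 0, 1/2) on (a,b,c,d), stochastically dominates her truthful PS allocation (1, 0, 1/2, 1/2) with respect to her true preference; hence PS with n < m is sd-manipulable (not weakly sd-strategyproof). -/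
open Finset

/-- Agent 1's true ranking over `(a,b,c,d) = (0,1,2,3)`: `a ≻ b ≻ c ≻ d` (identity). -/
def rank12 : Fin 4 → Fin 4 := id

/-- Agent 1's truthful PS allocation under reports `((abcd),(bcad))`. -/
def Atruth : Fin 4 → ℚ := ![1, 0, 1/2, 1/2]

/-- Agent 1's PS allocation under the misreport `(bacd)` against `(bcad)`. -/
def Amis : Fin 4 → ℚ := ![1, 1/2, 0, 1/2]

/-- Upper cumulative sum w.r.t. agent 1's true preference. -/
def w12 (X : Fin 4 → ℚ) (ℓ : Fin 4) : ℚ :=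
  ∑ j ∈ Finset.univ.filter (fun j => rank12 j ≤ rank12 ℓ), X j

theorem w12_eq_partialSums (X : Fin 4 → ℚ) :
    w12 X = ![X 0, X 0 + X 1, X 0 + X 1 + X 2, X 0 + X 1 + X 2 + X 3] := by
  funext ℓ
  rw [w12, sum_filter, Fin.sum_univ_four]
  fin_cases ℓ <;> simp [rank12]

theorem w12_Atruth : w12 Atruth = ![1, 1, 3/2, 2] := by
  rw [w12_eq_partialSums, Atruth]
  norm_num [Matrix.cons_val_two, Matrix.cons_val_three]

theorem w12_Amis : w12 Amis = ![1, 3/2, 3/2, 2] := by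
  rw [w12_eq_partialSums, Amis]
  norm_num [Matrix.cons_val_two, Matrix.cons_val_three]

/-- agent 1's PS allocation under the misreport stochastically dominates
her truthful PS allocation with respect to her true preference `a ≻ b ≻ c ≻ d`;
hence PS with `n < m` is sd-manipulable. -/
theorem ps_sd_manipulable :
    Amis ≠ Atruth ∧ (∀ ℓ, w12 Amis ℓ ≥ w12 Atruth ℓ) ∧ ∃ ℓ, w12 Amis ℓ > w12 Atruth ℓ := by
  have strict : w12 Amis 1 > w12 Atruth 1 := by norm_num [w12_Amis, w12_Atruth]
  refine ⟨fun h => (h ▸ strict).false, fun ℓ => ?_, ⟨1, strict⟩⟩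
  rw [w12_Amis, w12_Atruth]
  fin_cases ℓ <;> norm_num
end
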